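/- Let A and B be unital prime algebras over a field F, let M be a maximal two-sided ideal of A and N a maximal two-sided ideal of B. Then M ⊗ B + A ⊗ N (the sum of the span of {x ⊗ b : x ∈ M, b ∈ B} and the span of {a ⊗ y : a ∈ A, y ∈ N}) is a maximal two-sided ideal of A ⊗ B if and only if Z(A/M) ⊗ Z(B/N) is a field, where Z(A/M) and Z(B/N) denote the centers of the quotient algebras A/M and B/N. -/

import Mathlib

/-!
Modulo `M ⊗ B + A ⊗ N` the algebra `A ⊗ B` becomes `A/M ⊗ B/N`, so by the correspondence theorem
the question is when the tensor product of two simple algebras is simple.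
If `A` is simple, every nonzero ideal of `A ⊗ B` contains a nonzero element of `Z(A) ⊗ B`;
applied on both sides, every nonzero ideal of `A ⊗ B` meets `Z(A) ⊗ Z(B)`, so if the latter is a
field the ideal contains `1`. Conversely, the center of `A ⊗ B` is `Z(A) ⊗ Z(B)`, and the center
of a simple ring is a field.
-/

open TensorProduct

namespace TwoSidedIdeal

lemma ne_bot_iff_exists_ne_zero {R : Type*} [NonUnitalNonAssocRing R]
    {I : TwoSidedIdeal R} : I ≠ ⊥ ↔ ∃ x ∈ I, x ≠ 0 := by
  rw [Ne, eq_bot_iff, le_iff]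
  simp [Set.subset_def]

variable {R S G : Type*} [Ring R] [Ring S] [FunLike G R S] [RingHomClass G R S] {f : G}

lemma coe_map_of_surjective (hf : Function.Surjective f) (I : TwoSidedIdeal R) :
    (I.map f : Set S) = f '' I := by
  let J : TwoSidedIdeal S := .mk' (f '' I) ⟨0, I.zero_mem, map_zero f⟩
    (by rintro _ _ ⟨a, ha, rfl⟩ ⟨b, hb, rfl⟩; exact ⟨a + b, I.add_mem ha hb, map_add f a b⟩)
    (by rintro _ ⟨a, ha, rfl⟩; exact ⟨-a, I.neg_mem ha, map_neg f a⟩)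
    (by
      rintro x _ ⟨b, hb, rfl⟩
      obtain ⟨a, rfl⟩ := hf x
      exact ⟨a * b, I.mul_mem_left a b hb, map_mul f a b⟩)
    (by
      rintro _ y ⟨a, ha, rfl⟩
      obtain ⟨b, rfl⟩ := hf y
      exact ⟨a * b, I.mul_mem_right a b ha, map_mul f a b⟩)
  have hJ : (J : Set S) = f '' I := coe_mk' ..
  refine subset_antisymm ?_ subset_span
  rw [← hJ]
  exact span_le.2 hJ.ge

lemma mem_map_of_surjective (hf : Function.Surjective f) {I : TwoSidedIdeal R} {y : S} :
    y ∈ I.map f ↔ ∃ x ∈ I, f x = y := by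
  rw [← SetLike.mem_coe, coe_map_of_surjective hf]; rfl

def orderIsoIciKerOfSurjective (hf : Function.Surjective f) :
    TwoSidedIdeal S ≃o Set.Ici (ker f) where
  toFun J := ⟨J.comap f, fun x hx ↦ by rw [mem_comap, (mem_ker f).1 hx]; exact J.zero_mem⟩
  invFun I := I.1.map f
  left_inv J := by
    ext y
    obtain ⟨x, rfl⟩ := hf y
    simp only [mem_map_of_surjective hf, mem_comap]
    exact ⟨fun ⟨_, hx', h⟩ ↦ h ▸ hx', fun hx ↦ ⟨x, hx, rfl⟩⟩
  right_inv I := by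
    ext x
    simp only [mem_map_of_surjective hf, mem_comap]
    refine ⟨fun ⟨x', hx', h⟩ ↦ ?_, fun hx ↦ ⟨x, hx, rfl⟩⟩
    have : x' - x ∈ I.1 := I.2 <| (mem_ker f).2 <| by rw [map_sub, h, sub_self]
    simpa using I.1.sub_mem hx' this
  map_rel_iff' {J J'} := by
    refine ⟨fun h y hy ↦ ?_, fun h ↦ comap_le_comap f h⟩
    obtain ⟨x, rfl⟩ := hf y
    exact (mem_comap (f := f)).1 (h ((mem_comap (f := f)).2 hy))

lemma isSimpleRing_iff_isCoatom_ker (hf : Function.Surjective f) :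
    IsSimpleRing S ↔ IsCoatom (ker f) := by
  rw [isSimpleRing_iff, ← Set.isSimpleOrder_Ici_iff_isCoatom]
  exact (orderIsoIciKerOfSurjective hf).isSimpleOrder_iff

end TwoSidedIdeal

namespace TensorProduct

variable {R M N P Q : Type*} [CommRing R] [AddCommGroup M] [AddCommGroup N] [AddCommGroup P]
  [AddCommGroup Q] [Module R M] [Module R N] [Module R P] [Module R Q]

lemma ker_map_eq_span_sup_span {f : M →ₗ[R] P} {g : N →ₗ[R] Q}
    (hf : Function.Surjective f) (hg : Function.Surjective g) :
    LinearMap.ker (map f g) =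
      Submodule.span R {t | ∃ m ∈ LinearMap.ker f, ∃ n, t = m ⊗ₜ[R] n} ⊔
        Submodule.span R {t | ∃ m, ∃ n ∈ LinearMap.ker g, t = m ⊗ₜ[R] n} := by
  rw [map_ker (LinearMap.exact_subtype_ker_map f) hf (LinearMap.exact_subtype_ker_map g) hg,
    sup_comm, LinearMap.rTensor, LinearMap.lTensor, range_map_eq_span_tmul,
    range_map_eq_span_tmul]
  congr 2 <;> ext t
  · exact ⟨fun ⟨m, n, h⟩ ↦ ⟨m, m.2, n, h.symm⟩, fun ⟨m, hm, n, h⟩ ↦ ⟨⟨m, hm⟩, n, h.symm⟩⟩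
  · exact ⟨fun ⟨m, n, h⟩ ↦ ⟨m, n, n.2, h.symm⟩, fun ⟨m, n, hn, h⟩ ↦ ⟨m, ⟨n, hn⟩, h.symm⟩⟩

end TensorProduct

namespace Algebra.TensorProduct

variable {F A B : Type*} [Field F] [Ring A] [Algebra F A] [Ring B] [Algebra F B]

section Coefficients

variable {ι : Type*} [DecidableEq ι] (b : Module.Basis ι F B)

lemma equivFinsuppOfBasisRight_tmul_one_mul (x : A) (t : A ⊗[F] B) (i : ι) :
    equivFinsuppOfBasisRight b ((x ⊗ₜ[F] (1 : B)) * t) i =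
      x * equivFinsuppOfBasisRight b t i := by
  induction t using TensorProduct.induction_on with
  | zero => simp
  | tmul a c => simp [tmul_mul_tmul]
  | add u v hu hv => simp only [mul_add, map_add, Finsupp.add_apply, hu, hv]

lemma equivFinsuppOfBasisRight_mul_tmul_one (t : A ⊗[F] B) (y : A) (i : ι) :
    equivFinsuppOfBasisRight b (t * (y ⊗ₜ[F] (1 : B))) i =
      equivFinsuppOfBasisRight b t i * y := by
  induction t using TensorProduct.induction_on with
  | zero => simp
  | tmul a c => simp [tmul_mul_tmul]
  | add u v hu hv => simp only [add_mul, map_add, Finsupp.add_apply, hu, hv]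

def coeffIdeal (I : TwoSidedIdeal (A ⊗[F] B)) (s : Set ι) (i : ι) : TwoSidedIdeal A :=
  .mk' {a | ∃ u ∈ I, (∀ j ∉ s, equivFinsuppOfBasisRight b u j = 0) ∧
      equivFinsuppOfBasisRight b u i = a}
    ⟨0, I.zero_mem, by simp, by simp⟩
    (by
      rintro _ _ ⟨u, hu, hus, rfl⟩ ⟨v, hv, hvs, rfl⟩
      exact ⟨u + v, I.add_mem hu hv, fun j hj ↦ by simp [hus j hj, hvs j hj], by simp⟩)
    (by
      rintro _ ⟨u, hu, hus, rfl⟩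
      exact ⟨-u, I.neg_mem hu, fun j hj ↦ by simp [hus j hj], by simp⟩)
    (by
      rintro x _ ⟨u, hu, hus, rfl⟩
      refine ⟨_, I.mul_mem_left (x ⊗ₜ 1) u hu, fun j hj ↦ ?_, ?_⟩
      · simp [equivFinsuppOfBasisRight_tmul_one_mul, hus j hj]
      · simp [equivFinsuppOfBasisRight_tmul_one_mul])
    (by
      rintro _ y ⟨u, hu, hus, rfl⟩
      refine ⟨_, I.mul_mem_right u (y ⊗ₜ 1) hu, fun j hj ↦ ?_, ?_⟩
      · simp [equivFinsuppOfBasisRight_mul_tmul_one, hus j hj]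
      · simp [equivFinsuppOfBasisRight_mul_tmul_one])

lemma exists_mem_equivFinsuppOfBasisRight_eq_one [IsSimpleRing A]
    {I : TwoSidedIdeal (A ⊗[F] B)} {t : A ⊗[F] B} (ht : t ∈ I) {i : ι}
    (hi : i ∈ (equivFinsuppOfBasisRight b t).support) :
    ∃ u ∈ I, (equivFinsuppOfBasisRight b u).support ⊆ (equivFinsuppOfBasisRight b t).support ∧
      equivFinsuppOfBasisRight b u i = 1 := by
  have hone := IsSimpleRing.one_mem_of_ne_zero_mem
    (coeffIdeal b I (equivFinsuppOfBasisRight b t).support i)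
    (Finsupp.mem_support_iff.1 hi) ((TwoSidedIdeal.mem_mk' ..).2 ⟨t, ht, by simp, rfl⟩)
  obtain ⟨u, hu, hus, hui⟩ := (TwoSidedIdeal.mem_mk' ..).1 hone
  refine ⟨u, hu, fun j hj ↦ ?_, hui⟩
  by_contra hjt
  exact Finsupp.mem_support_iff.1 hj (hus j hjt)

lemma support_equivFinsuppOfBasisRight_commutator_subset {u : A ⊗[F] B} {i : ι}
    (hu : equivFinsuppOfBasisRight b u i = 1) (a : A) :
    (equivFinsuppOfBasisRight b ((a ⊗ₜ[F] 1) * u - u * (a ⊗ₜ[F] 1))).support ⊆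
      (equivFinsuppOfBasisRight b u).support.erase i := by
  intro j hj
  rw [Finsupp.mem_support_iff, map_sub, Finsupp.sub_apply,
    equivFinsuppOfBasisRight_tmul_one_mul, equivFinsuppOfBasisRight_mul_tmul_one] at hj
  refine Finset.mem_erase.2 ⟨?_, Finsupp.mem_support_iff.2 fun h ↦ hj (by simp [h])⟩
  rintro rfl
  exact hj (by simp [hu])

end Coefficients

/-- Among the nonzero elements of `I` take one with the fewest nonzero coordinates and, using
simplicity of `A`, normalise one coordinate to `1`; its commutators with `A ⊗ 1` have fewer
coordinates, hence vanish. -/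
lemma exists_ne_zero_mem_commute_tmul_one [IsSimpleRing A] {I : TwoSidedIdeal (A ⊗[F] B)}
    (hI : I ≠ ⊥) : ∃ u ∈ I, u ≠ 0 ∧ ∀ a : A, Commute (a ⊗ₜ[F] (1 : B)) u := by
  classical
  let b := Module.Free.chooseBasis F B
  obtain ⟨t, htI, ht0⟩ := TwoSidedIdeal.ne_bot_iff_exists_ne_zero.1 hI
  induction hn : (equivFinsuppOfBasisRight (M := A) b t).support.card
    using Nat.strong_induction_on generalizing t with
  | _ n ih =>
  obtain ⟨i, hi⟩ : (equivFinsuppOfBasisRight (M := A) b t).support.Nonempty := by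
    simpa using ht0
  obtain ⟨u, huI, hut, hui⟩ := exists_mem_equivFinsuppOfBasisRight_eq_one b htI hi
  by_cases hcomm : ∀ a : A, Commute (a ⊗ₜ[F] (1 : B)) u
  · refine ⟨u, huI, fun hu ↦ ?_, hcomm⟩
    simp [hu] at hui
  push Not at hcomm
  obtain ⟨a, ha⟩ := hcomm
  refine ih _ ?_ _ (I.sub_mem (I.mul_mem_left _ _ huI) (I.mul_mem_right _ _ huI))
    (sub_ne_zero.2 ha) rfl
  calc _ ≤ ((equivFinsuppOfBasisRight b u).support.erase i).card :=
        Finset.card_le_card (support_equivFinsuppOfBasisRight_commutator_subset b hui a)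
    _ < (equivFinsuppOfBasisRight b u).support.card :=
        Finset.card_erase_lt_of_mem (by simp [hui])
    _ ≤ n := hn ▸ Finset.card_le_card hut

lemma map_injective {C D : Type*} [Ring C] [Algebra F C] [Ring D] [Algebra F D]
    {f : A →ₐ[F] C} {g : B →ₐ[F] D} (hf : Function.Injective f) (hg : Function.Injective g) :
    Function.Injective (map f g) :=
  TensorProduct.map_injective_of_flat_flat f.toLinearMap g.toLinearMap hf hg

lemma comap_map_center_val_id_ne_bot [IsSimpleRing A] {I : TwoSidedIdeal (A ⊗[F] B)}
    (hI : I ≠ ⊥) : I.comap (map (Subalgebra.center F A).val (AlgHom.id F B)) ≠ ⊥ := by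
  obtain ⟨u, huI, hu0, hcomm⟩ := exists_ne_zero_mem_commute_tmul_one hI
  have : u ∈ Subalgebra.centralizer F (includeLeft : A →ₐ[F] A ⊗[F] B).range := by
    rintro _ ⟨a, rfl⟩
    exact (hcomm a).eq
  rw [Subalgebra.centralizer_coe_range_includeLeft_eq_center_tensorProduct] at this
  obtain ⟨v, rfl⟩ := this
  exact TwoSidedIdeal.ne_bot_iff_exists_ne_zero.2
    ⟨v, (TwoSidedIdeal.mem_comap _).2 huI, fun h ↦ hu0 (by simp [h])⟩

lemma comap_map_id_center_val_ne_bot [IsSimpleRing B] {I : TwoSidedIdeal (A ⊗[F] B)}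
    (hI : I ≠ ⊥) : I.comap (map (AlgHom.id F A) (Subalgebra.center F B).val) ≠ ⊥ := by
  have hI' : I.comap (Algebra.TensorProduct.comm F B A) ≠ ⊥ := by
    obtain ⟨x, hxI, hx0⟩ := TwoSidedIdeal.ne_bot_iff_exists_ne_zero.1 hI
    refine TwoSidedIdeal.ne_bot_iff_exists_ne_zero.2 ⟨(Algebra.TensorProduct.comm F B A).symm x,
      (TwoSidedIdeal.mem_comap _).2 (by simpa using hxI), by simpa using hx0⟩
  obtain ⟨v, hvI, hv0⟩ :=
    TwoSidedIdeal.ne_bot_iff_exists_ne_zero.1 (comap_map_center_val_id_ne_bot hI')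
  refine TwoSidedIdeal.ne_bot_iff_exists_ne_zero.2
    ⟨Algebra.TensorProduct.comm F _ _ v, (TwoSidedIdeal.mem_comap _).2 ?_, by simpa using hv0⟩
  simpa [TwoSidedIdeal.mem_comap, comm_comp_map_apply] using hvI

lemma map_center_val_id_comp_map_id_center_val :
    (map (Subalgebra.center F A).val (AlgHom.id F B)).comp
      (map (AlgHom.id F _) (Subalgebra.center F B).val) =
        map (Subalgebra.center F A).val (Subalgebra.center F B).val := by
  rw [← map_comp, AlgHom.comp_id, AlgHom.id_comp]

lemma comap_map_center_val_center_val_ne_bot [IsSimpleRing A] [IsSimpleRing B]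
    {I : TwoSidedIdeal (A ⊗[F] B)} (hI : I ≠ ⊥) :
    I.comap (map (Subalgebra.center F A).val (Subalgebra.center F B).val) ≠ ⊥ := by
  have h1 := comap_map_center_val_id_ne_bot (B := B) hI
  have h2 := comap_map_id_center_val_ne_bot (A := Subalgebra.center F A) h1
  obtain ⟨w, hwI, hw0⟩ := TwoSidedIdeal.ne_bot_iff_exists_ne_zero.1 h2
  refine TwoSidedIdeal.ne_bot_iff_exists_ne_zero.2 ⟨w, (TwoSidedIdeal.mem_comap _).2 ?_, hw0⟩
  rw [← map_center_val_id_comp_map_id_center_val]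
  exact (TwoSidedIdeal.mem_comap _).1 ((TwoSidedIdeal.mem_comap _).1 hwI)

theorem center_eq_range_map_center_val :
    Subalgebra.center F (A ⊗[F] B) =
      (map (Subalgebra.center F A).val (Subalgebra.center F B).val).range := by
  refine le_antisymm (fun y hy ↦ ?_) ?_
  · have hyA : y ∈ Subalgebra.centralizer F (includeLeft : A →ₐ[F] A ⊗[F] B).range :=
      fun x _ ↦ (Subalgebra.mem_center_iff.1 hy x)
    rw [Subalgebra.centralizer_coe_range_includeLeft_eq_center_tensorProduct] at hyA
    obtain ⟨v, rfl⟩ := hyA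
    have hvB : v ∈ Subalgebra.centralizer F
        (includeRight : B →ₐ[F] Subalgebra.center F A ⊗[F] B).range := by
      rintro _ ⟨c, rfl⟩
      apply map_injective (f := (Subalgebra.center F A).val) (g := AlgHom.id F B)
        Subtype.val_injective Function.injective_id
      simpa using Subalgebra.mem_center_iff.1 hy (1 ⊗ₜ c)
    rw [Subalgebra.centralizer_range_includeRight_eq_center_tensorProduct] at hvB
    obtain ⟨w, rfl⟩ := hvB
    exact ⟨w, by rw [← map_center_val_id_comp_map_id_center_val]; rfl⟩
  · rintro _ ⟨w, rfl⟩
    rw [Subalgebra.mem_center_iff]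
    intro y
    induction w using TensorProduct.induction_on with
    | zero => simp
    | tmul c d =>
      induction y using TensorProduct.induction_on with
      | zero => simp
      | tmul a b =>
        simp [tmul_mul_tmul, Subalgebra.mem_center_iff.1 c.2 a, Subalgebra.mem_center_iff.1 d.2 b]
      | add y z hy hz => simp only [add_mul, mul_add, hy, hz]
    | add v w hv hw => simp only [map_add, add_mul, mul_add, hv, hw]

theorem isSimpleRing_iff_isField_center_tensorProduct [IsSimpleRing A] [IsSimpleRing B] :
    IsSimpleRing (A ⊗[F] B) ↔
      IsField (Subalgebra.center F A ⊗[F] Subalgebra.center F B) := by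
  have hinj : Function.Injective (map (Subalgebra.center F A).val (Subalgebra.center F B).val) :=
    map_injective Subtype.val_injective Subtype.val_injective
  constructor
  · intro hS
    let e := (AlgEquiv.ofInjective _ hinj).trans
      (Subalgebra.equivOfEq _ _ center_eq_range_map_center_val.symm)
    exact e.toMulEquiv.isField (IsSimpleRing.isField_center (A ⊗[F] B))
  · intro hZ
    have : IsSimpleRing (Subalgebra.center F A ⊗[F] Subalgebra.center F B) :=
      (isSimpleRing_iff_isField _).2 hZ
    have : Nontrivial (A ⊗[F] B) := hinj.nontrivial
    refine .of_eq_bot_or_eq_top fun I ↦ or_iff_not_imp_left.2 fun hI ↦ ?_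
    have h1 := IsSimpleRing.one_mem_of_ne_bot _ (comap_map_center_val_center_val_ne_bot hI)
    exact (TwoSidedIdeal.one_mem_iff I).1 (by simpa using (TwoSidedIdeal.mem_comap _).1 h1)

end Algebra.TensorProduct

theorem maximal_ideal_of_tensor_product_iff_center_tensor_isField_general
    (F A B A' B' : Type*) [Field F] [Ring A] [Algebra F A] [Ring B] [Algebra F B]
    [Ring A'] [Algebra F A'] [Ring B'] [Algebra F B']
    (M : TwoSidedIdeal A) (hM : M ≠ ⊤)
    (hMmax : ∀ I : TwoSidedIdeal A, M < I → I = ⊤)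
    (N : TwoSidedIdeal B) (hN : N ≠ ⊤)
    (hNmax : ∀ I : TwoSidedIdeal B, N < I → I = ⊤)
    (qM : A →ₐ[F] A') (hqMsurj : Function.Surjective qM)
    (hkerM : ∀ x : A, qM x = 0 ↔ x ∈ M)
    (qN : B →ₐ[F] B') (hqNsurj : Function.Surjective qN)
    (hkerN : ∀ y : B, qN y = 0 ↔ y ∈ N) :
    ∃ K : TwoSidedIdeal (A ⊗[F] B),
      (K : Set (A ⊗[F] B)) =
        ↑(Submodule.span F {t : A ⊗[F] B | ∃ x ∈ M, ∃ b : B, t = x ⊗ₜ[F] b} ⊔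
           Submodule.span F {t : A ⊗[F] B | ∃ a : A, ∃ y ∈ N, t = a ⊗ₜ[F] y}) ∧
      ((K ≠ ⊤ ∧ ∀ J : TwoSidedIdeal (A ⊗[F] B), K < J → J = ⊤) ↔
        IsField ((Subalgebra.center F A') ⊗[F] (Subalgebra.center F B'))) := by
  have hM_ker : TwoSidedIdeal.ker qM = M := TwoSidedIdeal.ext fun x ↦ by
    rw [TwoSidedIdeal.mem_ker, hkerM]
  have hN_ker : TwoSidedIdeal.ker qN = N := TwoSidedIdeal.ext fun y ↦ by
    rw [TwoSidedIdeal.mem_ker, hkerN]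
  have : IsSimpleRing A' :=
    (TwoSidedIdeal.isSimpleRing_iff_isCoatom_ker hqMsurj).2 (hM_ker ▸ ⟨hM, hMmax⟩)
  have : IsSimpleRing B' :=
    (TwoSidedIdeal.isSimpleRing_iff_isCoatom_ker hqNsurj).2 (hN_ker ▸ ⟨hN, hNmax⟩)
  let φ := Algebra.TensorProduct.map qM qN
  refine ⟨TwoSidedIdeal.ker φ, ?_, ?_⟩
  · have hker := TensorProduct.ker_map_eq_span_sup_span (f := qM.toLinearMap)
      (g := qN.toLinearMap) hqMsurj hqNsurj
    simp only [LinearMap.mem_ker, AlgHom.toLinearMap_apply, hkerM, hkerN] at hker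
    ext t
    rw [SetLike.mem_coe, TwoSidedIdeal.mem_ker, SetLike.mem_coe, ← hker]
    rfl
  · rw [← Algebra.TensorProduct.isSimpleRing_iff_isField_center_tensorProduct,
      TwoSidedIdeal.isSimpleRing_iff_isCoatom_ker
        (Algebra.TensorProduct.map_surjective _ _ hqMsurj hqNsurj)]
    rfl

/-- Let `A`, `B` be unital prime `F`-algebras, `M` a maximal two-sided ideal of `A` and
`N` a maximal two-sided ideal of `B`, with quotients `A/M`, `B/N` presented abstractly by
surjective algebra homomorphisms `qM : A → A'`, `qN : B → B'` with kernels `M`, `N`. Then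
`M ⊗ B + A ⊗ N` is a maximal two-sided ideal of `A ⊗[F] B` if and only if
`Z(A/M) ⊗[F] Z(B/N)` is a field. -/
theorem maximal_ideal_of_tensor_product_iff_center_tensor_isField
    (F A B A' B' : Type*) [Field F] [Ring A] [Algebra F A] [Ring B] [Algebra F B]
    [Ring A'] [Algebra F A'] [Ring B'] [Algebra F B']
    (hAprime : ∀ a b : A, (∀ x : A, a * x * b = 0) → a = 0 ∨ b = 0)
    (hBprime : ∀ a b : B, (∀ x : B, a * x * b = 0) → a = 0 ∨ b = 0)
    (M : TwoSidedIdeal A) (hM : M ≠ ⊤)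
    (hMmax : ∀ I : TwoSidedIdeal A, M < I → I = ⊤)
    (N : TwoSidedIdeal B) (hN : N ≠ ⊤)
    (hNmax : ∀ I : TwoSidedIdeal B, N < I → I = ⊤)
    (qM : A →ₐ[F] A') (hqMsurj : Function.Surjective qM)
    (hkerM : ∀ x : A, qM x = 0 ↔ x ∈ M)
    (qN : B →ₐ[F] B') (hqNsurj : Function.Surjective qN)
    (hkerN : ∀ y : B, qN y = 0 ↔ y ∈ N) :
    ∃ K : TwoSidedIdeal (A ⊗[F] B),
      (K : Set (A ⊗[F] B)) =
        ↑(Submodule.span F {t : A ⊗[F] B | ∃ x ∈ M, ∃ b : B, t = x ⊗ₜ[F] b} ⊔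
           Submodule.span F {t : A ⊗[F] B | ∃ a : A, ∃ y ∈ N, t = a ⊗ₜ[F] y}) ∧
      ((K ≠ ⊤ ∧ ∀ J : TwoSidedIdeal (A ⊗[F] B), K < J → J = ⊤) ↔
        IsField ((Subalgebra.center F A') ⊗[F] (Subalgebra.center F B'))) :=
  maximal_ideal_of_tensor_product_iff_center_tensor_isField_general F A B A' B' M hM hMmax N hN
    hNmax qM hqMsurj hkerM qN hqNsurj hkerN
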